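/- arXiv:1703.10636 — 2 statements merged into one kernel-verified Lean document; each statement's English description precedes it below -/
import Mathlib

section
/- Let C and D be cartesian categories, let Σ_D ⊣ D* be an adjunction with Σ_D : D ⥤ C, let X be an object of C, and let L ⊣ R be an adjunction with L : C/X ⥤ D that is over C, i.e., there is a natural isomorphism Σ_D ∘ L ≅ Σ_X where Σ_X : C/X ⥤ C is the forgetful (domain) functor, and suppose L ⊣ R is Frobenius at the object D*(X) of D. If W is an object of D for which the unique morphism !_W : W ⟶ 1 is an effective descent morphism, then the structure morphism of the object R(W) of C/X, namely the morphism (R W).hom from the domain of R W to X in C, is an effective descent morphism of C. -/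
/-!
Write `A = R W` and `G = A.hom^* : C/X ⥤ C/A`. For `B` over `X`, the over-`C` condition provides
a map `B ⟶ R (D* X)`, and Frobenius at `D* X` then computes `L (B ×_X A) ≅ L B × W`, naturally in
`B`. Hence `G ⋙ Λ ≅ L ⋙ W^*`, where `Λ : C/A ⥤ D/W` applies `L` and the counit at `W`, and
`W^* = !_W^*` is monadic by assumption. Since `Σ_D ∘ L ≅ Σ_X`, the functors `L` and `Λ` are
conservative and `L` reflects the existence of coequalizers; both preserve them as left adjoints.
This is exactly what Beck's theorem needs to transfer monadicity from `W^*` to `G`.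
-/

open CategoryTheory Limits

universe v₁ v₂ v₃ u₁ u₂ u₃

/-- An adjunction `L ⊣ R` (with `L : E ⥤ D`) is Frobenius at an object `X` of `D` if for every
`g : W ⟶ R X` and `f : Y ⟶ X` the canonical morphism `L (W ×_{R X} R Y) ⟶ L W ×_X Y`, with
components `L π₁` and `ε_Y ∘ L π₂`, into the pullback of `f` along the adjoint transpose
`ε_X ∘ L g` of `g`, is an isomorphism. -/
def FrobeniusAt {E : Type u₁} [Category.{v₁} E] {D : Type u₂} [Category.{v₂} D]
    [HasFiniteLimits E] [HasFiniteLimits D]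
    {L : E ⥤ D} {R : D ⥤ E} (adj : L ⊣ R) (X : D) : Prop :=
  ∀ (W : E) (g : W ⟶ R.obj X) (Y : D) (f : Y ⟶ X),
    IsIso (pullback.lift (L.map (pullback.fst g (R.map f)))
      (L.map (pullback.snd g (R.map f)) ≫ adj.counit.app Y)
      (by rw [← L.map_comp_assoc, pullback.condition, L.map_comp_assoc]; simp) :
      L.obj (pullback g (R.map f)) ⟶ pullback (L.map g ≫ adj.counit.app X) f)

/-- A morphism `f : X ⟶ Y` of a cartesian category is an effective descent morphism if the
pullback functor `f* : C/Y ⥤ C/X` is monadic. -/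
def EffectiveDescentMorphism {C : Type u₁} [Category.{v₁} C] [HasFiniteLimits C]
    {X Y : C} (f : X ⟶ Y) : Prop :=
  Nonempty (MonadicRightAdjoint (Over.pullback f))

universe u₄

namespace CategoryTheory

section Monadicity

variable {𝒜 : Type u₁} [Category.{v₁} 𝒜] {ℬ : Type u₂} [Category.{v₁} ℬ]
  {𝒟 : Type u₃} [Category.{v₂} 𝒟] {ℰ : Type u₄} [Category.{v₂} ℰ]

lemma hasSplitCoequalizer_of_iso {F F' : 𝒜 ⥤ 𝒟} (e : F ≅ F') {A B : 𝒜} (u v : A ⟶ B)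
    [HasSplitCoequalizer (F.map u) (F.map v)] : HasSplitCoequalizer (F'.map u) (F'.map v) := by
  let q := HasSplitCoequalizer.isSplitCoequalizer (F.map u) (F.map v)
  exact ⟨_, e.inv.app B ≫ HasSplitCoequalizer.coequalizerπ (F.map u) (F.map v), ⟨{
    rightSection := q.rightSection ≫ e.hom.app B
    leftSection := e.inv.app B ≫ q.leftSection ≫ e.hom.app A
    condition := by simp [q.condition]
    rightSection_π := by simp [q.rightSection_π]
    leftSection_bottom := by
      rw [Category.assoc, Category.assoc, ← e.hom.naturality, q.leftSection_bottom_assoc,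
        Iso.inv_hom_id_app]
    leftSection_top := by
      rw [Category.assoc, Category.assoc, ← e.hom.naturality, q.leftSection_top_assoc,
        Category.assoc] }⟩⟩

instance reflectsIsomorphisms_of_monadicRightAdjoint (H : 𝒟 ⥤ ℰ) [MonadicRightAdjoint H] :
    H.ReflectsIsomorphisms :=
  reflectsIsomorphisms_of_iso (Monad.comparisonForget (monadicAdjunction H))

lemma hasColimit_parallelPair_comp_of_isSplitPair (H : 𝒟 ⥤ ℰ) {A B : 𝒟} (f g : A ⟶ B)
    [H.IsSplitPair f g] : HasColimit (parallelPair f g ⋙ H) :=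
  hasColimit_of_iso (F := parallelPair (H.map f) (H.map g)) (diagramIsoParallelPair _)

lemma hasCoequalizer_of_monadic_of_isSplitPair (H : 𝒟 ⥤ ℰ) [MonadicRightAdjoint H] {A B : 𝒟}
    (f g : A ⟶ B) [H.IsSplitPair f g] : HasCoequalizer f g := by
  let := Monad.createsGSplitCoequalizersOfMonadic H f g
  have := hasColimit_parallelPair_comp_of_isSplitPair H f g
  exact hasColimit_of_created (parallelPair f g) H

lemma preservesColimit_of_monadic_of_isSplitPair (H : 𝒟 ⥤ ℰ) [MonadicRightAdjoint H] {A B : 𝒟}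
    (f g : A ⟶ B) [H.IsSplitPair f g] : PreservesColimit (parallelPair f g) H := by
  let := Monad.createsGSplitCoequalizersOfMonadic H f g
  have := hasColimit_parallelPair_comp_of_isSplitPair H f g
  exact preservesColimit_of_createsColimit_and_hasColimit _ _

lemma hasCoequalizer_of_iso_comp {K : 𝒜 ⥤ 𝒟} {S : 𝒟 ⥤ ℬ} {F : 𝒜 ⥤ ℬ} (e : K ⋙ S ≅ F)
    [PreservesColimitsOfShape WalkingParallelPair S] [CreatesColimitsOfShape WalkingParallelPair F]
    {A B : 𝒜} (u v : A ⟶ B) [HasCoequalizer (K.map u) (K.map v)] : HasCoequalizer u v := by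
  have : HasColimit (parallelPair u v ⋙ K) :=
    hasColimit_of_iso (F := parallelPair (K.map u) (K.map v)) (diagramIsoParallelPair _)
  have : HasColimit (parallelPair u v ⋙ F) :=
    hasColimit_of_iso (Functor.isoWhiskerLeft _ e.symm ≪≫ (Functor.associator _ _ _).symm)
  exact hasColimit_of_created _ F

variable {G : 𝒜 ⥤ ℬ} {Λ : ℬ ⥤ ℰ} {K : 𝒜 ⥤ 𝒟} {H : 𝒟 ⥤ ℰ}

lemma isSplitPair_of_iso (e : G ⋙ Λ ≅ K ⋙ H) {A B : 𝒜} (u v : A ⟶ B) [G.IsSplitPair u v] :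
    H.IsSplitPair (K.map u) (K.map v) :=
  haveI : HasSplitCoequalizer ((G ⋙ Λ).map u) ((G ⋙ Λ).map v) :=
    inferInstanceAs (HasSplitCoequalizer (Λ.map (G.map u)) (Λ.map (G.map v)))
  (hasSplitCoequalizer_of_iso e u v : HasSplitCoequalizer ((K ⋙ H).map u) ((K ⋙ H).map v))

theorem nonempty_monadicRightAdjoint_of_iso_comp {F : ℬ ⥤ 𝒜} (adj : F ⊣ G)
    [MonadicRightAdjoint H]
    [Λ.ReflectsIsomorphisms] [PreservesColimitsOfShape WalkingParallelPair Λ]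
    [K.ReflectsIsomorphisms] [PreservesColimitsOfShape WalkingParallelPair K]
    (hK : ∀ ⦃A B : 𝒜⦄ (u v : A ⟶ B), HasCoequalizer (K.map u) (K.map v) → HasCoequalizer u v)
    (e : G ⋙ Λ ≅ K ⋙ H) : Nonempty (MonadicRightAdjoint G) := by
  have hasCoeq {A B : 𝒜} (u v : A ⟶ B) [G.IsSplitPair u v] : HasCoequalizer u v :=
    have := isSplitPair_of_iso e u v
    hK u v (hasCoequalizer_of_monadic_of_isSplitPair H _ _)
  have : G.ReflectsIsomorphisms :=
    have : (G ⋙ Λ).ReflectsIsomorphisms := reflectsIsomorphisms_of_iso e.symm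
    reflectsIsomorphisms_of_comp G Λ
  have : Monad.HasCoequalizerOfIsSplitPair G := ⟨fun u v _ => hasCoeq u v⟩
  have : Monad.PreservesColimitOfIsSplitPair G := ⟨fun {A B} u v _ => by
    have := hasCoeq u v
    have := isSplitPair_of_iso e u v
    have := hasColimit_parallelPair_comp_of_isSplitPair G u v
    have := preservesColimit_of_monadic_of_isSplitPair H (K.map u) (K.map v)
    have : PreservesColimit (parallelPair u v ⋙ K) H := preservesColimit_of_iso_diagram
      (K₁ := parallelPair (K.map u) (K.map v)) H (diagramIsoParallelPair (parallelPair u v ⋙ K)).symm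
    have := reflectsColimit_of_reflectsIsomorphisms (parallelPair u v ⋙ G) Λ
    apply preservesColimit_of_preserves_colimit_cocone (colimit.isColimit (parallelPair u v))
    exact isColimitOfReflects Λ <| (IsColimit.mapCoconeEquiv e.symm
      (isColimitOfPreserves (K ⋙ H) (colimit.isColimit _)))⟩
  exact ⟨Monad.monadicOfHasPreservesGSplitCoequalizersOfReflectsIsomorphisms adj⟩

end Monadicity

lemma Adjunction.whiskerRight_homEquiv_app {J : Type u₁} [Category.{v₁} J] {D : Type u₂}
    [Category.{v₂} D] {E : Type u₃} [Category.{v₃} E] {F : D ⥤ E} {G : E ⥤ D} (adj : F ⊣ G)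
    {P : J ⥤ D} {Q : J ⥤ E} (τ : P ⋙ F ⟶ Q) (j : J) :
    ((adj.whiskerRight J).homEquiv P Q τ).app j = adj.homEquiv _ _ (τ.app j) := by
  simp only [Adjunction.homEquiv_unit]
  simp

lemma IsPullback.of_isTerminal {C : Type u₁} [Category.{v₁} C] {P X Y Z Z' : C}
    {fst : P ⟶ X} {snd : P ⟶ Y} {f : X ⟶ Z} {g : Y ⟶ Z} (h : IsPullback fst snd f g)
    (hZ : IsTerminal Z) (f' : X ⟶ Z') (g' : Y ⟶ Z') (hZ' : IsTerminal Z') :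
    IsPullback fst snd f' g' := by
  rw [hZ'.hom_ext f' (hZ'.from X), hZ'.hom_ext g' (hZ'.from Y)]
  exact .of_is_product' (isProductOfIsTerminalIsPullback f g fst snd hZ h.isLimit) hZ'

lemma IsPullback.isIso_pullbackLift {C : Type u₁} [Category.{v₁} C] {P X Y Z : C}
    {fst : P ⟶ X} {snd : P ⟶ Y} {f : X ⟶ Z} {g : Y ⟶ Z} (h : IsPullback fst snd f g)
    [HasPullback f g] : IsIso (pullback.lift fst snd h.w) := by
  rw [show pullback.lift fst snd h.w = h.isoPullback.hom by
    apply pullback.hom_ext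
    · rw [pullback.lift_fst, h.isoPullback_hom_fst]
    · rw [pullback.lift_snd, h.isoPullback_hom_snd]]
  infer_instance

section Over

variable {C : Type u₁} [Category.{v₁} C] [HasPullbacks C] {X : C}

lemma Over.isPullback_mapPullbackAdj_counit (A B : Over X) :
    IsPullback ((Over.mapPullbackAdj A.hom).counit.app B)
      (A.iteratedSliceEquiv.inverse.obj ((Over.pullback A.hom).obj B)).hom
      (Over.mkIdTerminal.from B) (Over.mkIdTerminal.from A) := by
  rw [Over.mapPullbackAdj_counit_app]
  refine .of_map (Over.forget X) (Over.mkIdTerminal.hom_ext _ _) ?_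
  convert IsPullback.of_hasPullback B.hom A.hom using 2 <;> first | exact HEq.rfl | simp

lemma Over.isIso_mapPullbackAdj_homEquiv {Y : C} (g : X ⟶ Y) {x : Over X} {y : Over Y}
    (u : (Over.map g).obj x ⟶ y) (h : IsPullback u.left x.hom y.hom g) :
    IsIso ((Over.mapPullbackAdj g).homEquiv x y u) := by
  have hleft : (Over.forget X).map ((Over.mapPullbackAdj g).homEquiv x y u) =
      pullback.lift u.left x.hom h.w := by
    apply pullback.hom_ext <;>
      simp [Adjunction.homEquiv_unit, pullback.lift_fst, pullback.lift_snd, pullback.lift_fst_assoc]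
  have : IsIso ((Over.forget X).map ((Over.mapPullbackAdj g).homEquiv x y u)) :=
    hleft ▸ h.isIso_pullbackLift
  exact isIso_of_reflects_iso _ (Over.forget X)

end Over

section Frobenius

variable {E : Type u₁} [Category.{v₁} E] {D : Type u₂} [Category.{v₂} D]
  [HasFiniteLimits E] [HasFiniteLimits D] {L : E ⥤ D} {R : D ⥤ E} {adj : L ⊣ R} {Y : D}

lemma FrobeniusAt.isPullback_map (frob : FrobeniusAt adj Y) {P B : E} {Y' : D}
    {p₁ : P ⟶ B} {p₂ : P ⟶ R.obj Y'} {g : B ⟶ R.obj Y} {f : Y' ⟶ Y}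
    (h : IsPullback p₁ p₂ g (R.map f)) :
    IsPullback (L.map p₁) (L.map p₂ ≫ adj.counit.app Y') (L.map g ≫ adj.counit.app Y) f := by
  have := frob B g Y' f
  refine .of_iso_pullback ⟨?_⟩ (L.mapIso h.isoPullback ≪≫
    asIso (pullback.lift (L.map (pullback.fst g (R.map f)))
      (L.map (pullback.snd g (R.map f)) ≫ adj.counit.app Y') _)) ?_ ?_
  · rw [← L.map_comp_assoc, h.w, L.map_comp_assoc]
    simp
  · rw [Iso.trans_hom, asIso_hom, Category.assoc, pullback.lift_fst, Functor.mapIso_hom,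
      ← L.map_comp, h.isoPullback_hom_fst]
  · rw [Iso.trans_hom, asIso_hom, Category.assoc, pullback.lift_snd, Functor.mapIso_hom,
      ← L.map_comp_assoc, h.isoPullback_hom_snd]

lemma FrobeniusAt.isPullback_map_of_isTerminal (frob : FrobeniusAt adj Y) {P B T : E} {W T' : D}
    (g : B ⟶ R.obj Y) {p₁ : P ⟶ B} {p₂ : P ⟶ R.obj W} {t₁ : B ⟶ T} {t₂ : R.obj W ⟶ T}
    (hT : IsTerminal T) (h : IsPullback p₁ p₂ t₁ t₂) (t₁' : L.obj B ⟶ T') (t₂' : W ⟶ T')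
    (hT' : IsTerminal T') :
    IsPullback (L.map p₁) (L.map p₂ ≫ adj.counit.app W) t₁' t₂' := by
  -- `B × R W = B ×_{R Y} R (Y × W)` since `R` preserves `Y × W`; now apply Frobenius and paste.
  have := adj.rightAdjoint_preservesLimits
  have hW := IsPullback.of_hasPullback (terminal.from Y) (terminal.from W)
  have hRW := hW.map R
  have hBW := h.of_isTerminal hT (g ≫ R.map (terminal.from Y)) (R.map (terminal.from W))
    (terminalIsTerminal.isTerminalObj R)
  obtain ⟨q, hq₁, hq₂⟩ := hRW.exists_lift (p₁ ≫ g) p₂ (by simpa using hBW.w)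
  have hq : IsPullback p₁ q g (R.map (pullback.fst _ _)) :=
    .of_bot (by rwa [hq₂]) hq₁.symm hRW
  have hcounit : (L.map q ≫ adj.counit.app _) ≫ pullback.snd (terminal.from Y) (terminal.from W) =
      L.map p₂ ≫ adj.counit.app W := by
    simp [← hq₂]
  have := (frob.isPullback_map hq).paste_vert hW
  rw [hcounit] at this
  exact this.of_isTerminal terminalIsTerminal t₁' t₂' hT'

end Frobenius

section Sliced

variable {C : Type u₁} [Category.{v₁} C] {D : Type u₂} [Category.{v₂} D]
  {X : C} {L : Over X ⥤ D} {R : D ⥤ Over X}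

/-- `Λ : C/A ⥤ D/W` for `A = R W`, sending `Q ⟶ A` to `L Q ⟶ L (R W) ⟶ W`. -/
noncomputable def slicedLeftAdjoint (adj : L ⊣ R) (W : D) : Over (R.obj W).left ⥤ Over W :=
  (R.obj W).iteratedSliceEquiv.inverse ⋙ Over.post L ⋙ Over.map (adj.counit.app W)

variable (adj : L ⊣ R) (W : D)

instance reflectsIsomorphisms_slicedLeftAdjoint [L.ReflectsIsomorphisms] :
    (slicedLeftAdjoint adj W).ReflectsIsomorphisms :=
  have : (slicedLeftAdjoint adj W ⋙ Over.forget W).ReflectsIsomorphisms :=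
    inferInstanceAs ((R.obj W).iteratedSliceEquiv.inverse ⋙ Over.forget _ ⋙ L).ReflectsIsomorphisms
  reflectsIsomorphisms_of_comp _ (Over.forget W)

variable [HasFiniteLimits C] [HasFiniteLimits D]

instance : PreservesColimitsOfShape WalkingParallelPair (slicedLeftAdjoint adj W) := by
  have := adj.isLeftAdjoint
  dsimp only [slicedLeftAdjoint]
  infer_instance

/-- `L` applied to the projections `B ×_X R W ⟶ B`; its transpose along `Σ_{!_W} ⊣ !_W^*` is the
comparison `L (B ×_X R W) ⟶ L B × W`. -/
noncomputable def mapCounitComparison :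
    (Over.pullback (R.obj W).hom ⋙ slicedLeftAdjoint adj W) ⋙ Over.map (terminal.from W) ⟶
      L ⋙ (Over.equivalenceOfIsTerminal terminalIsTerminal).inverse where
  app B := Over.homMk (L.map ((Over.mapPullbackAdj (R.obj W).hom).counit.app B))
    (terminal.hom_ext _ _)
  naturality B B' h := by
    ext
    exact (L.map_comp _ _).symm.trans <| (congrArg L.map
      ((Over.mapPullbackAdj (R.obj W).hom).counit.naturality h)).trans (L.map_comp _ _)

variable {adj}

/-- The over-`C` condition `hover` supplies the map `B ⟶ R (D* X)` that Frobenius needs. -/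
lemma isPullback_map_mapPullbackAdj_counit {SigD : D ⥤ C} {Dstar : C ⥤ D} (adjD : SigD ⊣ Dstar)
    (hover : L ⋙ SigD ≅ Over.forget X) (frob : FrobeniusAt adj (Dstar.obj X)) (B : Over X) :
    IsPullback (L.map ((Over.mapPullbackAdj (R.obj W).hom).counit.app B))
      ((slicedLeftAdjoint adj W).obj ((Over.pullback (R.obj W).hom).obj B)).hom
      ((Over.equivalenceOfIsTerminal terminalIsTerminal).inverse.obj (L.obj B)).hom
      (terminal.from W) :=
  frob.isPullback_map_of_isTerminal (adj.homEquiv _ _ (adjD.homEquiv _ _ (hover.hom.app B ≫ B.hom)))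
    Over.mkIdTerminal (Over.isPullback_mapPullbackAdj_counit (R.obj W) B) _ _ terminalIsTerminal

lemma isIso_homEquiv_mapCounitComparison {SigD : D ⥤ C} {Dstar : C ⥤ D} (adjD : SigD ⊣ Dstar)
    (hover : L ⋙ SigD ≅ Over.forget X) (frob : FrobeniusAt adj (Dstar.obj X)) :
    IsIso (((Over.mapPullbackAdj (terminal.from W)).whiskerRight (Over X)).homEquiv _ _
      (mapCounitComparison adj W)) := by
  refine @NatIso.isIso_of_isIso_app _ _ _ _ _ _ _ fun B => ?_
  rw [Adjunction.whiskerRight_homEquiv_app]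
  exact Over.isIso_mapPullbackAdj_homEquiv _ _
    (isPullback_map_mapPullbackAdj_counit W adjD hover frob B)

noncomputable def pullbackCompSlicedLeftAdjointIso {SigD : D ⥤ C} {Dstar : C ⥤ D}
    (adjD : SigD ⊣ Dstar) (hover : L ⋙ SigD ≅ Over.forget X) (frob : FrobeniusAt adj (Dstar.obj X)) :
    Over.pullback (R.obj W).hom ⋙ slicedLeftAdjoint adj W ≅
      (L ⋙ (Over.equivalenceOfIsTerminal terminalIsTerminal).inverse) ⋙
        Over.pullback (terminal.from W) :=
  @asIso _ _ _ _ _ (isIso_homEquiv_mapCounitComparison W adjD hover frob)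

end Sliced

end CategoryTheory

/-- If `L ⊣ R` (with `L : C/X ⥤ D`) is over `C` (i.e. `Σ_D ∘ L ≅ Σ_X`) and is Frobenius at
`D*(X)`, and `!_W : W ⟶ 1` is an effective descent morphism of `D`, then the structure morphism
of `R W` (a morphism into `X` in `C`) is an effective descent morphism of `C`. -/
theorem effectiveDescent_structure_of_frobeniusAt
    {C : Type u₁} [Category.{v₁} C] {D : Type u₂} [Category.{v₂} D]
    [HasFiniteLimits C] [HasFiniteLimits D]
    {SigD : D ⥤ C} {Dstar : C ⥤ D} (adjD : SigD ⊣ Dstar) (X : C)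
    {L : Over X ⥤ D} {R : D ⥤ Over X} (adj : L ⊣ R)
    (hover : L ⋙ SigD ≅ Over.forget X)
    (frob : FrobeniusAt adj (Dstar.obj X))
    (W : D) (hW : EffectiveDescentMorphism (terminal.from W)) :
    EffectiveDescentMorphism ((R.obj W).hom) := by
  obtain ⟨_⟩ := hW
  have : L.ReflectsIsomorphisms :=
    have := reflectsIsomorphisms_of_iso hover.symm
    reflectsIsomorphisms_of_comp L SigD
  have := adj.isLeftAdjoint
  have := adjD.isLeftAdjoint
  exact nonempty_monadicRightAdjoint_of_iso_comp (Over.mapPullbackAdj (R.obj W).hom)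
    (fun _ _ u v _ => hasCoequalizer_of_iso_comp
      (K := L ⋙ (Over.equivalenceOfIsTerminal terminalIsTerminal).inverse)
      (S := Over.forget _ ⋙ SigD) hover u v)
    (pullbackCompSlicedLeftAdjointIso W adjD hover frob)
end

section
/- (Hannah's lemma.) Suppose given four categories C, C₁, C₂, C̄ and four adjunctions L₁ ⊣ R₁ (L₁ : C ⥤ C₁), L₂ ⊣ R₂ (L₂ : C₁ ⥤ C₂), L ⊣ R (L : C ⥤ C̄), and L̄ ⊣ R̄ (L̄ : C̄ ⥤ C₂), together with a natural isomorphism R₂ ⋙ R₁ ≅ R̄ ⋙ R (i.e., R₁ ∘ R₂ ≅ R ∘ R̄ as functors C₂ ⥤ C), and suppose the Beck–Chevalley condition holds: the canonical natural transformation L ∘ R₁ ⟶ R̄ ∘ L₂ (obtained as the mate of the given isomorphism, i.e., the composite L R₁ ⟶ L R₁ R₂ L₂ ≅ L R R̄ L₂ ⟶ R̄ L₂ using the unit of L₂ ⊣ R₂ and the counit of L ⊣ R) is an isomorphism. If R₁ and R₂ are both monadic, then the composite R₂ ⋙ R₁ (i.e., R₁ ∘ R₂ : C₂ ⥤ C)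 is monadic. -/
/-!
By Beck's theorem it suffices that `R₂ ⋙ R₁` creates coequalizers of `(R₂ ⋙ R₁)`-split pairs.
Such a pair `f, g` is sent by `R₂` to an `R₁`-split pair, whose coequalizer `R₁` creates. The
Beck–Chevalley isomorphism gives `T₂ ⋙ R₁ ≅ R₁ ⋙ (L ⋙ R)` for the monad `T₂ = L₂ ⋙ R₂`, so `T₂`
maps `R₁`-split pairs to `R₁`-split pairs; since `R₁` creates and `L ⋙ R` preserves their
coequalizers, `T₂` preserves coequalizers of `R₁`-split pairs. A monadic functor creates every
colimit its monad preserves, so `R₂` creates the coequalizer of `f, g` too.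
-/

open CategoryTheory Limits

universe v₁ v₂ v₃ u₁ u₂ u₃

universe v₄ u₄

namespace CategoryTheory

section SplitPairs

variable {C : Type u₁} [Category.{v₁} C] {D : Type u₂} [Category.{v₂} D]
  {E : Type u₃} [Category.{v₃} E] {G : D ⥤ C}

lemma hasColimit_parallelPair_comp_of_isSplitPair_s18 {X Y : D} (f g : X ⟶ Y) [G.IsSplitPair f g] :
    HasColimit (parallelPair f g ⋙ G) :=
  hasColimit_of_iso (F := parallelPair (G.map f) (G.map g)) (diagramIsoParallelPair _)

lemma preservesColimit_parallelPair_comp_of_isSplitPair {X Y : D} (f g : X ⟶ Y)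
    [G.IsSplitPair f g] (H : C ⥤ E) : PreservesColimit (parallelPair f g ⋙ G) H :=
  preservesColimit_of_iso_diagram (K₁ := parallelPair (G.map f) (G.map g)) H
    (diagramIsoParallelPair (parallelPair f g ⋙ G)).symm

lemma Functor.isSplitPair_of_iso {G' : D ⥤ C} (e : G ≅ G') {X Y : D} (f g : X ⟶ Y)
    [G.IsSplitPair f g] : G'.IsSplitPair f g := by
  obtain ⟨Z, π, ⟨s⟩⟩ := HasSplitCoequalizer.splittable (f := G.map f) (g := G.map g)
  refine ⟨Z, e.inv.app Y ≫ π, ⟨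
    { rightSection := s.rightSection ≫ e.hom.app Y
      leftSection := e.inv.app Y ≫ s.leftSection ≫ e.hom.app X
      condition := ?_
      rightSection_π := by simp [s.rightSection_π]
      leftSection_bottom := by simp [← NatTrans.naturality]
      leftSection_top := by simp [← NatTrans.naturality] }⟩⟩
  rw [e.inv.naturality_assoc, e.inv.naturality_assoc, s.condition]

lemma Functor.isSplitPair_map_of_iso_comp {D' : Type*} [Category D'] {C' : Type*} [Category C']
    {R : D ⥤ C} {S : D ⥤ D'} {R' : D' ⥤ C'} {K : C ⥤ C'} (e : S ⋙ R' ≅ R ⋙ K)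
    {X Y : D} (u v : X ⟶ Y) [R.IsSplitPair u v] : R'.IsSplitPair (S.map u) (S.map v) :=
  have : (R ⋙ K).IsSplitPair u v :=
    inferInstanceAs (HasSplitCoequalizer (K.map (R.map u)) (K.map (R.map v)))
  Functor.isSplitPair_of_iso e.symm u v

end SplitPairs

namespace Monad

variable {C : Type u₁} [Category.{v₁} C] {D : Type u₂} [Category.{v₂} D]

-- Mathlib's `createsGSplitCoequalizersOfMonadic` and `monadicOfCreatesGSplitCoequalizers` assume
-- that `C` and `D` have the same morphism universe; the versions below do not.

noncomputable abbrev createsColimitOfIsSplitPairOfMonadic (G : D ⥤ C) [MonadicRightAdjoint G]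
    {X Y : D} (f g : X ⟶ Y) [G.IsSplitPair f g] : CreatesColimit (parallelPair f g) G :=
  let T := monadicLeftAdjoint G ⋙ G
  have : (G ⋙ T).IsSplitPair f g :=
    inferInstanceAs (HasSplitCoequalizer (T.map (G.map f)) (T.map (G.map g)))
  have : PreservesColimit (parallelPair f g ⋙ G) T :=
    preservesColimit_parallelPair_comp_of_isSplitPair f g T
  have : PreservesColimit ((parallelPair f g ⋙ G) ⋙ T) T :=
    preservesColimit_parallelPair_comp_of_isSplitPair (G := G ⋙ T) f g T
  monadicCreatesColimitOfPreservesColimit G (parallelPair f g)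

section Beck

variable {F : C ⥤ D} {G : D ⥤ C} (adj : F ⊣ G)
  (hG : ∀ ⦃X Y : D⦄ (f g : X ⟶ Y) [G.IsSplitPair f g], CreatesColimit (parallelPair f g) G)
include hG

noncomputable def isColimitCounitCofork (Y : D) :
    IsColimit (Cofork.ofπ (adj.counit.app Y) (adj.counit_naturality (adj.counit.app Y)) :
      Cofork (F.map (G.map (adj.counit.app Y))) (adj.counit.app (F.obj (G.obj Y)))) :=
  have : G.IsSplitPair (F.map (G.map (adj.counit.app Y))) (adj.counit.app (F.obj (G.obj Y))) :=
    ⟨_, _, ⟨beckSplitCoequalizer ((comparison adj).obj Y)⟩⟩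
  have := hG (F.map (G.map (adj.counit.app Y))) (adj.counit.app (F.obj (G.obj Y)))
  isColimitOfReflects G <| (isColimitMapCoconeCoforkEquiv G _).symm
    (beckCoequalizer ((comparison adj).obj Y))

lemma comparison_faithful_of_createsColimit : (comparison adj).Faithful where
  map_injective {Y Y'} f g h := by
    apply Cofork.IsColimit.hom_ext (isColimitCounitCofork adj hG Y)
    have hfg : G.map f = G.map g := congrArg Algebra.Hom.f h
    simpa [hfg] using (adj.counit_naturality f).symm.trans
      ((congrArg (fun k => F.map k ≫ adj.counit.app Y') hfg).trans (adj.counit_naturality g))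

lemma comparison_full_of_createsColimit : (comparison adj).Full where
  map_surjective {Y Y'} h := by
    let k : G.obj Y ⟶ G.obj Y' := h.f
    have hk : G.map (F.map k) ≫ G.map (adj.counit.app Y') = G.map (adj.counit.app Y) ≫ k := h.h
    have hcond : F.map (G.map (adj.counit.app Y)) ≫ F.map k ≫ adj.counit.app Y' =
        adj.counit.app (F.obj (G.obj Y)) ≫ F.map k ≫ adj.counit.app Y' := by
      rw [← F.map_comp_assoc, ← hk, F.map_comp_assoc]
      simp
    let d := Cofork.IsColimit.desc (isColimitCounitCofork adj hG Y) _ hcond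
    have hd : adj.counit.app Y ≫ d = F.map k ≫ adj.counit.app Y' :=
      Cofork.IsColimit.π_desc (isColimitCounitCofork adj hG Y)
    refine ⟨d, Algebra.Hom.ext ?_⟩
    show G.map d = k
    calc G.map d = adj.unit.app (G.obj Y) ≫ G.map (adj.counit.app Y ≫ d) := by simp
      _ = k := by simp [hd]

lemma comparison_essSurj_of_createsColimit : (comparison adj).EssSurj where
  mem_essImage A := by
    let a : G.obj (F.obj A.A) ⟶ A.A := A.a
    let u : F.obj (G.obj (F.obj A.A)) ⟶ F.obj A.A := F.map a
    let v : F.obj (G.obj (F.obj A.A)) ⟶ F.obj A.A := adj.counit.app (F.obj A.A)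
    have : G.IsSplitPair u v := ⟨_, _, ⟨beckSplitCoequalizer A⟩⟩
    have := hG u v
    have := hasColimit_parallelPair_comp_of_isSplitPair_s18 (G := G) u v
    have := hasColimit_of_created (parallelPair u v) G
    have := preservesColimit_of_createsColimit_and_hasColimit (parallelPair u v) G
    let B := coequalizer u v
    let q : F.obj A.A ⟶ B := coequalizer.π u v
    let φ : A.A ≅ G.obj B := (beckCoequalizer A).coconePointUniqueUpToIso
      (isColimitOfHasCoequalizerOfPreservesColimit G u v)
    have hφ : a ≫ φ.hom = G.map q :=
      (beckCoequalizer A).comp_coconePointUniqueUpToIso_hom _ WalkingParallelPair.one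
    refine ⟨B, ⟨(Algebra.isoMk φ ?_).symm⟩⟩
    let εB : F.obj (G.obj B) ⟶ B := adj.counit.app B
    change G.map (F.map φ.hom) ≫ G.map εB = a ≫ φ.hom
    have hunit : adj.unit.app A.A ≫ a = 𝟙 A.A := A.unit
    have hassoc : G.map u ≫ a = G.map v ≫ a := A.assoc.symm
    have : IsSplitEpi (G.map u) := ⟨⟨G.map (F.map (adj.unit.app A.A)), by
      rw [← G.map_comp, ← F.map_comp, hunit, F.map_id, G.map_id]⟩⟩
    rw [← cancel_epi (G.map u)]
    calc G.map u ≫ G.map (F.map φ.hom) ≫ G.map εB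
        = G.map (F.map (a ≫ φ.hom)) ≫ G.map εB := by simp [u]
      _ = G.map v ≫ G.map q := by
        rw [hφ, ← G.map_comp, ← G.map_comp]
        exact congrArg G.map (adj.counit_naturality q)
      _ = G.map u ≫ a ≫ φ.hom := by rw [reassoc_of% hassoc, hφ]

noncomputable abbrev monadicOfCreatesSplitCoequalizers : MonadicRightAdjoint G where
  L := F
  adj := adj
  eqv :=
    { faithful := comparison_faithful_of_createsColimit adj hG
      full := comparison_full_of_createsColimit adj hG
      essSurj := comparison_essSurj_of_createsColimit adj hG }

end Beck

section Composition

variable {E : Type u₃} [Category.{v₃} E] {R₁ : D ⥤ C} [MonadicRightAdjoint R₁]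

lemma preservesColimit_parallelPair_of_iso_comp {S : D ⥤ D} {K : C ⥤ C} (e : S ⋙ R₁ ≅ R₁ ⋙ K)
    {X Y : D} (u v : X ⟶ Y) [R₁.IsSplitPair u v] : PreservesColimit (parallelPair u v) S := by
  have := Functor.isSplitPair_map_of_iso_comp e u v
  have := createsColimitOfIsSplitPairOfMonadic R₁ u v
  have := hasColimit_parallelPair_comp_of_isSplitPair_s18 (G := R₁) u v
  have := preservesColimit_of_createsColimit_and_hasColimit (parallelPair u v) R₁
  have := preservesColimit_parallelPair_comp_of_isSplitPair (G := R₁) u v K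
  have := preservesColimit_of_natIso (parallelPair u v) e.symm
  have := createsColimitOfIsSplitPairOfMonadic R₁ (S.map u) (S.map v)
  have := reflectsColimit_of_iso_diagram (K₁ := parallelPair (S.map u) (S.map v)) R₁
    (diagramIsoParallelPair (parallelPair u v ⋙ S)).symm
  exact preservesColimit_of_reflects_of_preserves S R₁

variable {L₂ : D ⥤ E} {R₂ : E ⥤ D} [MonadicRightAdjoint R₂] (adj₂ : L₂ ⊣ R₂) {K : C ⥤ C}
  (e : (L₂ ⋙ R₂) ⋙ R₁ ≅ R₁ ⋙ K)
include adj₂ e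

noncomputable abbrev createsColimitParallelPairOfIsoComp {X Y : E} (f g : X ⟶ Y)
    [R₁.IsSplitPair (R₂.map f) (R₂.map g)] : CreatesColimit (parallelPair f g) R₂ :=
  let T := monadicLeftAdjoint R₂ ⋙ R₂
  let eT : T ⋙ R₁ ≅ R₁ ⋙ K := Functor.isoWhiskerRight
    (Functor.isoWhiskerRight ((monadicAdjunction R₂).leftAdjointUniq adj₂) R₂) R₁ ≪≫ e
  have := Functor.isSplitPair_map_of_iso_comp eT (R₂.map f) (R₂.map g)
  have := preservesColimit_parallelPair_of_iso_comp eT (R₂.map f) (R₂.map g)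
  have := preservesColimit_parallelPair_of_iso_comp eT (T.map (R₂.map f)) (T.map (R₂.map g))
  have : PreservesColimit (parallelPair f g ⋙ R₂) T :=
    preservesColimit_of_iso_diagram (K₁ := parallelPair (R₂.map f) (R₂.map g)) T
      (diagramIsoParallelPair (parallelPair f g ⋙ R₂)).symm
  have : PreservesColimit ((parallelPair f g ⋙ R₂) ⋙ T) T :=
    preservesColimit_of_iso_diagram (K₁ := parallelPair (T.map (R₂.map f)) (T.map (R₂.map g))) T
      (diagramIsoParallelPair ((parallelPair f g ⋙ R₂) ⋙ T)).symm
  monadicCreatesColimitOfPreservesColimit R₂ (parallelPair f g)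

noncomputable abbrev monadicCompOfIsoComp : MonadicRightAdjoint (R₂ ⋙ R₁) :=
  monadicOfCreatesSplitCoequalizers ((monadicAdjunction R₁).comp (monadicAdjunction R₂))
    fun X Y f g _ =>
      have : R₁.IsSplitPair (R₂.map f) (R₂.map g) := ‹_›
      have := createsColimitParallelPairOfIsoComp adj₂ e f g
      have := createsColimitOfIsSplitPairOfMonadic R₁ (R₂.map f) (R₂.map g)
      have := createsColimitOfIsoDiagram (K₁ := parallelPair (R₂.map f) (R₂.map g)) R₁
        (diagramIsoParallelPair (parallelPair f g ⋙ R₂)).symm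
      inferInstance

end Composition

end Monad

end CategoryTheory

theorem hannah_lemma_general
    {C : Type u₁} [Category.{v₁} C] {C₁ : Type u₂} [Category.{v₂} C₁]
    {C₂ : Type u₃} [Category.{v₃} C₂] {Cbar : Type u₄} [Category.{v₄} Cbar]
    {R₁ : C₁ ⥤ C}
    {L₂ : C₁ ⥤ C₂} {R₂ : C₂ ⥤ C₁} (adj₂ : L₂ ⊣ R₂)
    {L : C ⥤ Cbar} {R : Cbar ⥤ C} (adj : L ⊣ R)
    {Rbar : C₂ ⥤ Cbar}
    (iso : R₂ ⋙ R₁ ≅ Rbar ⋙ R)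
    (bc : IsIso ((mateEquiv adj₂ adj).symm iso.hom))
    [MonadicRightAdjoint R₁] [MonadicRightAdjoint R₂] :
    Nonempty (MonadicRightAdjoint (R₂ ⋙ R₁)) :=
  let beckChevalley : R₁ ⋙ L ≅ L₂ ⋙ Rbar := asIso ((mateEquiv adj₂ adj).symm iso.hom)
  ⟨Monad.monadicCompOfIsoComp adj₂ (K := L ⋙ R) <|
    Functor.associator _ _ _ ≪≫ Functor.isoWhiskerLeft L₂ iso ≪≫ (Functor.associator _ _ _).symm ≪≫
      Functor.isoWhiskerRight beckChevalley.symm R ≪≫ Functor.associator _ _ _⟩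

/-- Hannah's lemma: given a square of adjunctions commuting up to a natural isomorphism
`R₂ ⋙ R₁ ≅ R̄ ⋙ R` and satisfying the Beck–Chevalley condition (the mate
`R₁ ⋙ L ⟶ L₂ ⋙ R̄` of the isomorphism is an isomorphism), if `R₁` and `R₂` are monadic then
so is the composite `R₂ ⋙ R₁`. -/
theorem hannah_lemma
    {C : Type u₁} [Category.{v₁} C] {C₁ : Type u₂} [Category.{v₂} C₁]
    {C₂ : Type u₃} [Category.{v₃} C₂] {Cbar : Type u₄} [Category.{v₄} Cbar]
    {L₁ : C ⥤ C₁} {R₁ : C₁ ⥤ C} (adj₁ : L₁ ⊣ R₁)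
    {L₂ : C₁ ⥤ C₂} {R₂ : C₂ ⥤ C₁} (adj₂ : L₂ ⊣ R₂)
    {L : C ⥤ Cbar} {R : Cbar ⥤ C} (adj : L ⊣ R)
    {Lbar : Cbar ⥤ C₂} {Rbar : C₂ ⥤ Cbar} (adjbar : Lbar ⊣ Rbar)
    (iso : R₂ ⋙ R₁ ≅ Rbar ⋙ R)
    (bc : IsIso ((mateEquiv adj₂ adj).symm iso.hom))
    [MonadicRightAdjoint R₁] [MonadicRightAdjoint R₂] :
    Nonempty (MonadicRightAdjoint (R₂ ⋙ R₁)) :=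
  hannah_lemma_general adj₂ adj iso bc
end
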